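/- Let (𝕃(V),∂) with V = V₀ ⊕ V₁, ∂(V₀) = 0, ∂(V₁) ⊆ 𝕃(V₀), be the minimal Quillen model of a 2-cone X, and (L,D) the model of X × X as above. Any Lie algebra morphism Δ : 𝕃(V) → L defined on generators by Δ(v) = v + v' for v ∈ V₀ and Δ(v) = v + v' + Γ((∂v)‾) for v ∈ V₁ (where (∂v)‾ ∈ 𝕄(V₀) is a representative of ∂v) commutes with the differentials, D∘Δ = Δ∘∂, and its composition with each of the two projections (L,D) → (𝕃(V),∂) and (L,D) → (𝕃(V'),∂') is the identity; hence Δ is a Quillen model of the diagonal map X → X × X. -/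

import Mathlib

/-
Both projections are Lie morphisms killing `s(V ⊗ V')`, hence every term of `Γ`, so `p₁ Δ` and
`p₂ Δ` agree with the identity and with the priming map on generators, and therefore on `𝕃(V)`.
Likewise `D Δ = Δ ∂` only has to be checked on generators, where on `V₁` it reduces to
`D Γ(A) = ΔĀ - Ā - Ā'` for `A ∈ 𝕄(V₀)`. That identity is proved by induction on `A` from
`D σ_Ā(T) = [Ā, T]` for `T ∈ 𝕄(V₀')` (itself an induction starting from `D s(v ⊗ w) = [v, w]`):
writing `X = Δ + id + ′` and `Y = Δ - id - ′`, the two halves of `Γ(AB)` contribute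
`½([X Ā, Y B̄] + [Y Ā, X B̄]) = [ΔĀ, ΔB̄] - [Ā + Ā', B̄ + B̄']`, and the `σ`-terms supply the
missing cross terms `[Ā, B̄'] + [Ā', B̄]`.
-/
universe u

/-- A graded Lie algebra over `ℚ`: a `ℤ`-graded vector space with a bilinear bracket
satisfying graded antisymmetry and the graded Jacobi identity on homogeneous elements. -/
structure GLA (Lc : Type u) [AddCommGroup Lc] [Module ℚ Lc] where
  grade : ℤ → Submodule ℚ Lc
  internal : DirectSum.IsInternal grade
  br : Lc →ₗ[ℚ] Lc →ₗ[ℚ] Lc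
  br_mem : ∀ {i j : ℤ} {x y : Lc}, x ∈ grade i → y ∈ grade j → br x y ∈ grade (i + j)
  antisymm : ∀ {i j : ℤ} {x y : Lc}, x ∈ grade i → y ∈ grade j →
      br x y = -((-1 : ℚ) ^ (i * j) • br y x)
  jacobi : ∀ {i j : ℤ} {x y : Lc} (z : Lc), x ∈ grade i → y ∈ grade j →
      br x (br y z) = br (br x y) z + (-1 : ℚ) ^ (i * j) • br y (br x z)

namespace GLA

variable {Lc : Type u} [AddCommGroup Lc] [Module ℚ Lc]

/-- The Lie subalgebra (as a submodule closed under the bracket) generated by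
a graded family of subspaces. -/
def lieSub (G : GLA Lc) (p : ℤ → Submodule ℚ Lc) : Submodule ℚ Lc :=
  sInf {q | (∀ i, p i ≤ q) ∧ ∀ x ∈ q, ∀ y ∈ q, G.br x y ∈ q}

/-- The submodule of decomposable elements of `L`: the span of all brackets. -/
def dec (G : GLA Lc) : Submodule ℚ Lc :=
  Submodule.span ℚ {x : Lc | ∃ a b : Lc, x = G.br a b}

/-- A graded Lie algebra is reduced if it vanishes in degrees `≤ 0`. -/
def Reduced (G : GLA Lc) : Prop := ∀ i : ℤ, i ≤ 0 → G.grade i = ⊥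

end GLA


/-- Trees of the free graded linear magma on the graded subspace family `P`
(homogeneous generators and formal binary products). -/
inductive Mag {Lc : Type u} [AddCommGroup Lc] [Module ℚ Lc]
    (P : ℤ → Submodule ℚ Lc) : Type u
  | of (i : ℤ) (v : Lc) (hv : v ∈ P i) : Mag P
  | mul : Mag P → Mag P → Mag P

namespace Mag

variable {Lc : Type u} [AddCommGroup Lc] [Module ℚ Lc] {P : ℤ → Submodule ℚ Lc}

/-- Degree of a magma element. -/
def deg : Mag P → ℤ
  | of i _ _ => i
  | mul A B => deg A + deg B

/-- The class of a magma element in the (free) graded Lie algebra. -/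
def real (G : GLA Lc) : Mag P → Lc
  | of _ v _ => v
  | mul A B => G.br (real G A) (real G B)

/-- The star operator `⋆ : 𝕄(V) ⊗ 𝕃(W) → L`, applied to a homogeneous element `T`
of degree `t`, defined recursively by `a ⋆ T = 0` for a generator `a` and
`AB ⋆ T = (-1)^{|A|} σ_Ā σ_B̄ (T) + (-1)^{|B||T|} [A ⋆ T, B̄] + [Ā, B ⋆ T]`. -/
def star (G : GLA Lc) (sg : ℤ → Lc → (Lc →ₗ[ℚ] Lc)) (t : ℤ) : Mag P → Lc → Lc
  | of _ _ _, _ => 0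
  | mul A B, T =>
      (-1 : ℚ) ^ deg A • sg (deg A) (real G A) (sg (deg B) (real G B) T)
        + (-1 : ℚ) ^ (deg B * t) • G.br (star G sg t A T) (real G B)
        + G.br (real G A) (star G sg t B T)

end Mag

namespace Mag

/-- The map `Γ : 𝕄(V₀) → L` defined by `Γ(v) = 0` and
`Γ(AB) = σ_Ā(B̄') - (-1)^{|A||B|} σ_B̄(Ā')
  + ½(-1)^{|A|}[ΔĀ + Ā + Ā', ΓB] + ½[ΓA, ΔB̄ + B̄ + B̄']`,
where `pr` is the "prime" (copy) map and `Dl` models the diagonal `Δ` on `𝕃(V₀)`. -/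
def gam {Lc : Type u} [AddCommGroup Lc] [Module ℚ Lc] {P : ℤ → Submodule ℚ Lc}
    (G : GLA Lc) (sg : ℤ → Lc → (Lc →ₗ[ℚ] Lc)) (pr Dl : Lc →ₗ[ℚ] Lc) : Mag P → Lc
  | of _ _ _ => 0
  | mul A B =>
      sg (deg A) (real G A) (pr (real G B))
        - (-1 : ℚ) ^ (deg A * deg B) • sg (deg B) (real G B) (pr (real G A))
        + ((2 : ℚ)⁻¹ * (-1 : ℚ) ^ deg A) •
            G.br (Dl (real G A) + real G A + pr (real G A)) (gam G sg pr Dl B)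
        + (2 : ℚ)⁻¹ • G.br (gam G sg pr Dl A) (Dl (real G B) + real G B + pr (real G B))

end Mag

namespace GLA

variable {Lc : Type u} [AddCommGroup Lc] [Module ℚ Lc] (G : GLA Lc)

def IsDerivation (d : Lc →ₗ[ℚ] Lc) (k : ℤ) : Prop :=
  ∀ {i : ℤ} (x y : Lc), x ∈ G.grade i →
    d (G.br x y) = G.br (d x) y + (-1 : ℚ) ^ (k * i) • G.br x (d y)

theorem lieSub_le {p : ℤ → Submodule ℚ Lc} {q : Submodule ℚ Lc} (hp : ∀ i, p i ≤ q)
    (hq : ∀ x ∈ q, ∀ y ∈ q, G.br x y ∈ q) : G.lieSub p ≤ q :=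
  sInf_le ⟨hp, hq⟩

theorem le_lieSub (p : ℤ → Submodule ℚ Lc) (i : ℤ) : p i ≤ G.lieSub p :=
  le_sInf fun _ hq => hq.1 i

theorem br_mem_lieSub {p : ℤ → Submodule ℚ Lc} {x y : Lc} (hx : x ∈ G.lieSub p)
    (hy : y ∈ G.lieSub p) : G.br x y ∈ G.lieSub p :=
  Submodule.mem_sInf.2 fun _ hq =>
    hq.2 _ (Submodule.mem_sInf.1 hx _ hq) _ (Submodule.mem_sInf.1 hy _ hq)

theorem lieSub_mono {p q : ℤ → Submodule ℚ Lc} (h : ∀ i, p i ≤ q i) :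
    G.lieSub p ≤ G.lieSub q :=
  G.lieSub_le (fun i => (h i).trans (G.le_lieSub q i)) fun _ hx _ hy => G.br_mem_lieSub hx hy

theorem lieSub_le_span {p : ℤ → Submodule ℚ Lc} {S : Set Lc}
    (hp : ∀ i, p i ≤ Submodule.span ℚ S) (hS : ∀ x ∈ S, ∀ y ∈ S, G.br x y ∈ S) :
    G.lieSub p ≤ Submodule.span ℚ S := by
  refine G.lieSub_le hp fun x hx y hy => ?_
  have h := Submodule.apply_mem_map₂ G.br hx hy
  rw [Submodule.map₂_span_span] at h
  exact Submodule.span_mono (Set.image2_subset_iff.2 hS) h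

theorem eqOn_lieSub {p : ℤ → Submodule ℚ Lc} {f g : Lc →ₗ[ℚ] Lc}
    (hf : ∀ {x y}, x ∈ G.lieSub p → y ∈ G.lieSub p → f (G.br x y) = G.br (f x) (f y))
    (hg : ∀ {x y}, x ∈ G.lieSub p → y ∈ G.lieSub p → g (G.br x y) = G.br (g x) (g y))
    (hfg : ∀ i, Set.EqOn f g (p i)) : Set.EqOn f g (G.lieSub p) := by
  suffices G.lieSub p ≤ G.lieSub p ⊓ LinearMap.eqLocus f g from fun x hx => (this hx).2
  refine G.lieSub_le (fun i v hv => ⟨G.le_lieSub p i hv, hfg i hv⟩) ?_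
  rintro x ⟨hx, hfgx⟩ y ⟨hy, hfgy⟩
  refine ⟨G.br_mem_lieSub hx hy, ?_⟩
  rw [SetLike.mem_coe, LinearMap.mem_eqLocus] at hfgx hfgy ⊢
  rw [hf hx hy, hg hx hy, hfgx, hfgy]

theorem IsDerivation.eqOn_comp_lieSub {G : GLA Lc} {d Δ : Lc →ₗ[ℚ] Lc} {k : ℤ}
    (hd : G.IsDerivation d k) {p : ℤ → Submodule ℚ Lc} (hp : ∀ i, p i ≤ G.grade i)
    (hΔ : ∀ {x y}, x ∈ G.lieSub p → y ∈ G.lieSub p → Δ (G.br x y) = G.br (Δ x) (Δ y))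
    (hd_gen : ∀ i, p i ≤ (G.lieSub p).comap d) (hΔ_gen : ∀ i, p i ≤ (G.grade i).comap Δ)
    (hcomm : ∀ i, Set.EqOn (d ∘ₗ Δ) (Δ ∘ₗ d) (p i)) :
    Set.EqOn (d ∘ₗ Δ) (Δ ∘ₗ d) (G.lieSub p) := by
  -- homogeneity is carried along because the Leibniz rule needs it
  let S : Set Lc := {x | ∃ i, x ∈ G.grade i ∧ x ∈ G.lieSub p ∧ d x ∈ G.lieSub p ∧
    Δ x ∈ G.grade i ∧ d (Δ x) = Δ (d x)}
  have hS : ∀ x ∈ S, ∀ y ∈ S, G.br x y ∈ S := by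
    rintro x ⟨i, hxi, hx, hdx, hΔx, hx_comm⟩ y ⟨j, hyj, hy, hdy, hΔy, hy_comm⟩
    refine ⟨i + j, G.br_mem hxi hyj, G.br_mem_lieSub hx hy, ?_, ?_, ?_⟩
    · rw [hd x y hxi]
      exact add_mem (G.br_mem_lieSub hdx hy) (Submodule.smul_mem _ _ (G.br_mem_lieSub hx hdy))
    · rw [hΔ hx hy]
      exact G.br_mem hΔx hΔy
    · rw [hΔ hx hy, hd _ _ hΔx, hd x y hxi, map_add, map_smul, hΔ hdx hy, hΔ hx hdy,
        hx_comm, hy_comm]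
  have hle : G.lieSub p ≤ Submodule.span ℚ S :=
    G.lieSub_le_span (fun i v hv => Submodule.subset_span
      ⟨i, hp i hv, G.le_lieSub p i hv, hd_gen i hv, hΔ_gen i hv, hcomm i hv⟩) hS
  have hS_eq : Set.EqOn (d ∘ₗ Δ) (Δ ∘ₗ d) S := by
    rintro x ⟨_, _, _, _, _, h⟩
    exact h
  exact fun x hx => LinearMap.eqOn_span' hS_eq (hle hx)

end GLA

namespace Mag

variable {Lc : Type u} [AddCommGroup Lc] [Module ℚ Lc] {P Q : ℤ → Submodule ℚ Lc}
  (G : GLA Lc)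

theorem real_mem_grade (hP : ∀ i, P i ≤ G.grade i) : ∀ A : Mag P, A.real G ∈ G.grade A.deg
  | of i _ hv => hP i hv
  | mul A B => G.br_mem (real_mem_grade hP A) (real_mem_grade hP B)

theorem real_mem_lieSub {p : ℤ → Submodule ℚ Lc} (hP : ∀ i, P i ≤ p i) :
    ∀ A : Mag P, A.real G ∈ G.lieSub p
  | of i _ hv => G.le_lieSub p i (hP i hv)
  | mul A B => G.br_mem_lieSub (real_mem_lieSub hP A) (real_mem_lieSub hP B)

def map (f : Lc →ₗ[ℚ] Lc) (hf : ∀ i, ∀ v ∈ P i, f v ∈ Q i) : Mag P → Mag Q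
  | of i v hv => of i (f v) (hf i v hv)
  | mul A B => mul (map f hf A) (map f hf B)

variable {f : Lc →ₗ[ℚ] Lc}

theorem deg_map (hf : ∀ i, ∀ v ∈ P i, f v ∈ Q i) : ∀ A : Mag P, (A.map f hf).deg = A.deg
  | of _ _ _ => rfl
  | mul A B => by rw [map, deg, deg, deg_map hf A, deg_map hf B]

theorem real_map (hf : ∀ i, ∀ v ∈ P i, f v ∈ Q i)
    (hbr : ∀ A B : Mag P, f (G.br (A.real G) (B.real G)) = G.br (f (A.real G)) (f (B.real G))) :
    ∀ A : Mag P, (A.map f hf).real G = f (A.real G)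
  | of _ _ _ => rfl
  | mul A B => by rw [map, real, real, real_map hf hbr A, real_map hf hbr B, hbr]

theorem apply_real_mem_grade (hQ : ∀ i, Q i ≤ G.grade i) (hf : ∀ i, ∀ v ∈ P i, f v ∈ Q i)
    (hbr : ∀ A B : Mag P, f (G.br (A.real G) (B.real G)) = G.br (f (A.real G)) (f (B.real G)))
    (A : Mag P) : f (A.real G) ∈ G.grade A.deg := by
  simpa only [real_map G hf hbr, deg_map hf] using real_mem_grade G hQ (A.map f hf)

end Mag

namespace GLA.IsDerivation

variable {Lc : Type u} [AddCommGroup Lc] [Module ℚ Lc] {G : GLA Lc} {P Q : ℤ → Submodule ℚ Lc}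
  {d : Lc →ₗ[ℚ] Lc} {k : ℤ}

theorem apply_real_eq_zero (hd : G.IsDerivation d k) (hP : ∀ i, P i ≤ G.grade i)
    (h0 : ∀ i, P i ≤ LinearMap.ker d) : ∀ A : Mag P, d (A.real G) = 0
  | .of i _ hv => h0 i hv
  | .mul A B => by
    rw [Mag.real, hd _ _ (Mag.real_mem_grade G hP A), apply_real_eq_zero hd hP h0 A,
      apply_real_eq_zero hd hP h0 B, map_zero, LinearMap.zero_apply, map_zero, smul_zero,
      add_zero]

theorem apply_apply_real_eq_zero (hd : G.IsDerivation d k) (hQ : ∀ i, Q i ≤ G.grade i)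
    (h0 : ∀ i, Q i ≤ LinearMap.ker d) {f : Lc →ₗ[ℚ] Lc} (hf : ∀ i, ∀ v ∈ P i, f v ∈ Q i)
    (hbr : ∀ A B : Mag P, f (G.br (A.real G) (B.real G)) = G.br (f (A.real G)) (f (B.real G)))
    (A : Mag P) : d (f (A.real G)) = 0 := by
  rw [← Mag.real_map G hf hbr]
  exact hd.apply_real_eq_zero hQ h0 _

end GLA.IsDerivation

section Signs

variable {Lc : Type u} [AddCommGroup Lc] [Module ℚ Lc]

theorem neg_one_zpow_smul_smul {m n r : ℤ} (h : m + n = r) (x : Lc) :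
    (-1 : ℚ) ^ m • (-1 : ℚ) ^ n • x = (-1 : ℚ) ^ r • x := by
  rw [smul_smul, ← zpow_add₀ (by norm_num), h]

theorem neg_one_zpow_smul_smul_self (m : ℤ) (x : Lc) : (-1 : ℚ) ^ m • (-1 : ℚ) ^ m • x = x := by
  rw [neg_one_zpow_smul_smul rfl, Even.neg_one_zpow ⟨m, rfl⟩, one_smul]

end Signs

/-- The properties of the derivations `σ_A` of `L` that involve only `𝕃(V₀ ⊕ W₀)`, where `W₀`
plays the role of `V₀'`. -/
structure SigmaDerivations {Lc : Type u} [AddCommGroup Lc] [Module ℚ Lc] (G : GLA Lc)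
    (V0 W0 : ℤ → Submodule ℚ Lc) (sus : Lc →ₗ[ℚ] Lc →ₗ[ℚ] Lc)
    (sg : ℤ → Lc → (Lc →ₗ[ℚ] Lc)) : Prop where
  V0_le_grade : ∀ i, V0 i ≤ G.grade i
  W0_le_grade : ∀ j, W0 j ≤ G.grade j
  sg_mem_grade : ∀ {a : ℤ} {A : Lc}, A ∈ G.lieSub (fun i => V0 i ⊔ W0 i) → A ∈ G.grade a →
    ∀ {n : ℤ} {x : Lc}, x ∈ G.grade n → sg a A x ∈ G.grade (n + a + 1)
  isDerivation_sg : ∀ {a : ℤ} {A : Lc}, A ∈ G.lieSub (fun i => V0 i ⊔ W0 i) →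
    A ∈ G.grade a → G.IsDerivation (sg a A) (a + 1)
  sg_gen_apply_gen : ∀ {i j : ℤ} {v w : Lc}, v ∈ V0 i → w ∈ W0 j →
    sg j w v = (-1 : ℚ) ^ (i * j) • sus v w
  sg_apply_gen : ∀ {a : ℤ} {A : Lc}, A ∈ G.lieSub (fun i => V0 i ⊔ W0 i) → A ∈ G.grade a →
    ∀ {j : ℤ} {w : Lc}, w ∈ W0 j → sg a A w = (-1 : ℚ) ^ (j * a) • sg j w A

namespace SigmaDerivations

variable {Lc : Type u} [AddCommGroup Lc] [Module ℚ Lc] {G : GLA Lc}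
  {V0 W0 : ℤ → Submodule ℚ Lc} {sus : Lc →ₗ[ℚ] Lc →ₗ[ℚ] Lc} {sg : ℤ → Lc → (Lc →ₗ[ℚ] Lc)}
  {D p pr Δf : Lc →ₗ[ℚ] Lc}

theorem D_sg_gen_real (hσ : SigmaDerivations G V0 W0 sus sg) (hD : G.IsDerivation D (-1))
    (hD_V0 : ∀ i, V0 i ≤ LinearMap.ker D)
    (hD_sus : ∀ {i j : ℤ} {v w : Lc}, v ∈ V0 i → w ∈ W0 j → D (sus v w) = G.br v w)
    {j : ℤ} {w : Lc} (hw : w ∈ W0 j) :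
    ∀ A : Mag V0, D (sg j w (A.real G)) = -G.br w (A.real G)
  | .of i v hv => by
    rw [Mag.real, hσ.sg_gen_apply_gen hv hw, map_smul, hD_sus hv hw,
      G.antisymm (hσ.W0_le_grade j hw) (hσ.V0_le_grade i hv), neg_neg, mul_comm]
  | .mul A B => by
    have hwL : w ∈ G.lieSub (fun i => V0 i ⊔ W0 i) :=
      G.le_lieSub _ j (Submodule.mem_sup_right hw)
    have hwj := hσ.W0_le_grade j hw
    have hA := Mag.real_mem_grade G hσ.V0_le_grade A
    rw [Mag.real, hσ.isDerivation_sg hwL hwj _ _ hA, map_add, map_smul,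
      hD _ _ (hσ.sg_mem_grade hwL hwj hA), hD _ _ hA, D_sg_gen_real hσ hD hD_V0 hD_sus hw A,
      D_sg_gen_real hσ hD hD_V0 hD_sus hw B, hD.apply_real_eq_zero hσ.V0_le_grade hD_V0 A,
      hD.apply_real_eq_zero hσ.V0_le_grade hD_V0 B, G.jacobi _ hwj hA]
    simp only [map_zero, map_neg, LinearMap.zero_apply, LinearMap.neg_apply, smul_zero,
      add_zero, zero_add, smul_neg]
    rw [neg_one_zpow_smul_smul (r := j * A.deg) (by ring)]
    abel

theorem D_sg_real_real (hσ : SigmaDerivations G V0 W0 sus sg) (hD : G.IsDerivation D (-1))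
    (hD_V0 : ∀ i, V0 i ≤ LinearMap.ker D) (hD_W0 : ∀ j, W0 j ≤ LinearMap.ker D)
    (hD_sus : ∀ {i j : ℤ} {v w : Lc}, v ∈ V0 i → w ∈ W0 j → D (sus v w) = G.br v w)
    (A : Mag V0) :
    ∀ T : Mag W0, D (sg A.deg (A.real G) (T.real G)) = G.br (A.real G) (T.real G)
  | .of j w hw => by
    have hA := Mag.real_mem_grade G hσ.V0_le_grade A
    rw [Mag.real, hσ.sg_apply_gen (Mag.real_mem_lieSub G (fun _ => le_sup_left) A) hA hw,
      map_smul, hσ.D_sg_gen_real hD hD_V0 hD_sus hw A,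
      G.antisymm hA (hσ.W0_le_grade j hw), smul_neg, mul_comm]
  | .mul T U => by
    have hAL : A.real G ∈ G.lieSub (fun i => V0 i ⊔ W0 i) :=
      Mag.real_mem_lieSub G (fun _ => le_sup_left) A
    have hA := Mag.real_mem_grade G hσ.V0_le_grade A
    have hT := Mag.real_mem_grade G hσ.W0_le_grade T
    rw [Mag.real, hσ.isDerivation_sg hAL hA _ _ hT, map_add, map_smul,
      hD _ _ (hσ.sg_mem_grade hAL hA hT), hD _ _ hT,
      D_sg_real_real hσ hD hD_V0 hD_W0 hD_sus A T, D_sg_real_real hσ hD hD_V0 hD_W0 hD_sus A U,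
      hD.apply_real_eq_zero hσ.W0_le_grade hD_W0 T, hD.apply_real_eq_zero hσ.W0_le_grade hD_W0 U,
      G.jacobi _ hA hT]
    simp only [map_zero, LinearMap.zero_apply, smul_zero, add_zero, zero_add]
    rw [neg_one_zpow_smul_smul (r := A.deg * T.deg) (by ring)]

theorem apply_sg_gen_real_eq_zero (hσ : SigmaDerivations G V0 W0 sus sg)
    (hp : ∀ x y, p (G.br x y) = G.br (p x) (p y))
    (hp_sus : ∀ {i j : ℤ} {v w : Lc}, v ∈ V0 i → w ∈ W0 j → p (sus v w) = 0)
    {j : ℤ} {w : Lc} (hw : w ∈ W0 j) : ∀ A : Mag V0, p (sg j w (A.real G)) = 0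
  | .of i v hv => by
    rw [Mag.real, hσ.sg_gen_apply_gen hv hw, map_smul, hp_sus hv hw, smul_zero]
  | .mul A B => by
    rw [Mag.real, hσ.isDerivation_sg (G.le_lieSub _ j (Submodule.mem_sup_right hw))
      (hσ.W0_le_grade j hw) _ _ (Mag.real_mem_grade G hσ.V0_le_grade A), map_add, map_smul, hp, hp,
      apply_sg_gen_real_eq_zero hσ hp hp_sus hw A, apply_sg_gen_real_eq_zero hσ hp hp_sus hw B]
    simp only [map_zero, LinearMap.zero_apply, smul_zero, add_zero]

theorem apply_sg_real_real_eq_zero (hσ : SigmaDerivations G V0 W0 sus sg)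
    (hp : ∀ x y, p (G.br x y) = G.br (p x) (p y))
    (hp_sus : ∀ {i j : ℤ} {v w : Lc}, v ∈ V0 i → w ∈ W0 j → p (sus v w) = 0)
    (A : Mag V0) : ∀ T : Mag W0, p (sg A.deg (A.real G) (T.real G)) = 0
  | .of j w hw => by
    rw [Mag.real, hσ.sg_apply_gen (Mag.real_mem_lieSub G (fun _ => le_sup_left) A)
      (Mag.real_mem_grade G hσ.V0_le_grade A) hw, map_smul,
      hσ.apply_sg_gen_real_eq_zero hp hp_sus hw A, smul_zero]
  | .mul T U => by
    rw [Mag.real, hσ.isDerivation_sg (Mag.real_mem_lieSub G (fun _ => le_sup_left) A)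
      (Mag.real_mem_grade G hσ.V0_le_grade A) _ _ (Mag.real_mem_grade G hσ.W0_le_grade T),
      map_add, map_smul, hp, hp,
      apply_sg_real_real_eq_zero hσ hp hp_sus A T, apply_sg_real_real_eq_zero hσ hp hp_sus A U]
    simp only [map_zero, LinearMap.zero_apply, smul_zero, add_zero]

theorem diag_mem_sup (hpr : ∀ i, ∀ v ∈ V0 i, pr v ∈ W0 i)
    (hΔ : ∀ i, ∀ v ∈ V0 i, Δf v = v + pr v) : ∀ i, ∀ v ∈ V0 i, Δf v ∈ V0 i ⊔ W0 i :=
  fun i v hv => hΔ i v hv ▸ add_mem (Submodule.mem_sup_left hv)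
    (Submodule.mem_sup_right (hpr i v hv))

theorem gam_mem_grade (hσ : SigmaDerivations G V0 W0 sus sg)
    (hpr : ∀ i, ∀ v ∈ V0 i, pr v ∈ W0 i)
    (hpr_br : ∀ A B : Mag V0, pr (G.br (A.real G) (B.real G)) =
      G.br (pr (A.real G)) (pr (B.real G)))
    (hΔ : ∀ i, ∀ v ∈ V0 i, Δf v = v + pr v)
    (hΔ_br : ∀ A B : Mag V0, Δf (G.br (A.real G) (B.real G)) =
      G.br (Δf (A.real G)) (Δf (B.real G))) :
    ∀ A : Mag V0, A.gam G sg pr Δf ∈ G.grade (A.deg + 1)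
  | .of _ _ _ => Submodule.zero_mem _
  | .mul A B => by
    have hgrade := Mag.real_mem_grade G hσ.V0_le_grade
    have hL : ∀ A : Mag V0, A.real G ∈ G.lieSub (fun i => V0 i ⊔ W0 i) :=
      Mag.real_mem_lieSub G fun _ => le_sup_left
    have hgrade_pr := Mag.apply_real_mem_grade G hσ.W0_le_grade hpr hpr_br
    have hgrade_diag := Mag.apply_real_mem_grade G
      (fun i => sup_le (hσ.V0_le_grade i) (hσ.W0_le_grade i)) (diag_mem_sup hpr hΔ) hΔ_br
    have hgamA := gam_mem_grade hσ hpr hpr_br hΔ hΔ_br A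
    have hgamB := gam_mem_grade hσ hpr hpr_br hΔ hΔ_br B
    rw [Mag.gam, Mag.deg]
    refine add_mem (add_mem (sub_mem ?_ (Submodule.smul_mem _ _ ?_)) (Submodule.smul_mem _ _ ?_))
      (Submodule.smul_mem _ _ ?_)
    · convert hσ.sg_mem_grade (hL A) (hgrade A) (hgrade_pr B) using 2
      ring
    · exact hσ.sg_mem_grade (hL B) (hgrade B) (hgrade_pr A)
    · convert G.br_mem (add_mem (add_mem (hgrade_diag A) (hgrade A)) (hgrade_pr A))
        hgamB using 2
      ring
    · convert G.br_mem hgamA (add_mem (add_mem (hgrade_diag B) (hgrade B)) (hgrade_pr B))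
        using 2
      ring

theorem D_gam (hσ : SigmaDerivations G V0 W0 sus sg) (hD : G.IsDerivation D (-1))
    (hD_V0 : ∀ i, V0 i ≤ LinearMap.ker D) (hD_W0 : ∀ j, W0 j ≤ LinearMap.ker D)
    (hD_sus : ∀ {i j : ℤ} {v w : Lc}, v ∈ V0 i → w ∈ W0 j → D (sus v w) = G.br v w)
    (hpr : ∀ i, ∀ v ∈ V0 i, pr v ∈ W0 i)
    (hpr_br : ∀ A B : Mag V0, pr (G.br (A.real G) (B.real G)) =
      G.br (pr (A.real G)) (pr (B.real G)))
    (hΔ : ∀ i, ∀ v ∈ V0 i, Δf v = v + pr v)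
    (hΔ_br : ∀ A B : Mag V0, Δf (G.br (A.real G) (B.real G)) =
      G.br (Δf (A.real G)) (Δf (B.real G))) :
    ∀ A : Mag V0, D (A.gam G sg pr Δf) = Δf (A.real G) - A.real G - pr (A.real G)
  | .of i v hv => by
    rw [Mag.gam, map_zero, Mag.real, hΔ i v hv]
    abel
  | .mul A B => by
    have hgrade := Mag.real_mem_grade G hσ.V0_le_grade
    have hgrade_pr := Mag.apply_real_mem_grade G hσ.W0_le_grade hpr hpr_br
    have hgrade_sup : ∀ i, V0 i ⊔ W0 i ≤ G.grade i :=
      fun i => sup_le (hσ.V0_le_grade i) (hσ.W0_le_grade i)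
    have hgrade_X : Δf (A.real G) + A.real G + pr (A.real G) ∈ G.grade A.deg :=
      add_mem (add_mem (Mag.apply_real_mem_grade G hgrade_sup (diag_mem_sup hpr hΔ) hΔ_br A)
        (hgrade A)) (hgrade_pr A)
    have hD_X : ∀ A : Mag V0, D (Δf (A.real G) + A.real G + pr (A.real G)) = 0 := fun A => by
      rw [map_add, map_add, hD.apply_apply_real_eq_zero hgrade_sup
          (fun i => sup_le (hD_V0 i) (hD_W0 i)) (diag_mem_sup hpr hΔ) hΔ_br,
        hD.apply_real_eq_zero hσ.V0_le_grade hD_V0,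
        hD.apply_apply_real_eq_zero hσ.W0_le_grade hD_W0 hpr hpr_br, add_zero, add_zero]
    have hD_sg_pr : ∀ A B : Mag V0,
        D (sg A.deg (A.real G) (pr (B.real G))) = G.br (A.real G) (pr (B.real G)) :=
      fun A B => by
        simpa only [Mag.real_map G hpr hpr_br] using
          hσ.D_sg_real_real hD hD_V0 hD_W0 hD_sus A (B.map pr hpr)
    have hflip : (-1 : ℚ) ^ (A.deg * B.deg) • G.br (B.real G) (pr (A.real G)) =
        -G.br (pr (A.real G)) (B.real G) := by
      rw [G.antisymm (hgrade B) (hgrade_pr A), smul_neg, mul_comm B.deg,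
        neg_one_zpow_smul_smul_self]
    rw [Mag.gam, map_add, map_add, map_sub, map_smul, map_smul, map_smul, hD_sg_pr, hD_sg_pr,
      hflip, hD _ _ hgrade_X, hD _ _ (gam_mem_grade hσ hpr hpr_br hΔ hΔ_br A),
      D_gam hσ hD hD_V0 hD_W0 hD_sus hpr hpr_br hΔ hΔ_br A,
      D_gam hσ hD hD_V0 hD_W0 hD_sus hpr hpr_br hΔ hΔ_br B, hD_X, hD_X, Mag.real, hΔ_br,
      hpr_br]
    simp only [map_zero, LinearMap.zero_apply, zero_add]
    rw [mul_smul, neg_one_zpow_smul_smul (r := 0) (by ring), zpow_zero, one_smul]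
    simp only [map_add, map_sub, LinearMap.add_apply, LinearMap.sub_apply]
    module

theorem apply_gam_eq_zero (hσ : SigmaDerivations G V0 W0 sus sg)
    (hp : ∀ x y, p (G.br x y) = G.br (p x) (p y))
    (hp_sus : ∀ {i j : ℤ} {v w : Lc}, v ∈ V0 i → w ∈ W0 j → p (sus v w) = 0)
    (hpr : ∀ i, ∀ v ∈ V0 i, pr v ∈ W0 i)
    (hpr_br : ∀ A B : Mag V0, pr (G.br (A.real G) (B.real G)) =
      G.br (pr (A.real G)) (pr (B.real G))) :
    ∀ A : Mag V0, p (A.gam G sg pr Δf) = 0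
  | .of _ _ _ => map_zero p
  | .mul A B => by
    have hp_sg_pr : ∀ A B : Mag V0, p (sg A.deg (A.real G) (pr (B.real G))) = 0 :=
      fun A B => by
        simpa only [Mag.real_map G hpr hpr_br] using
          hσ.apply_sg_real_real_eq_zero hp hp_sus A (B.map pr hpr)
    rw [Mag.gam, map_add, map_add, map_sub, map_smul, map_smul, map_smul, hp_sg_pr, hp_sg_pr,
      hp, hp, apply_gam_eq_zero hσ hp hp_sus hpr hpr_br A,
      apply_gam_eq_zero hσ hp hp_sus hpr hpr_br B]
    simp only [map_zero, LinearMap.zero_apply, smul_zero, sub_zero, add_zero]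

end SigmaDerivations

theorem statement18_general
    {Lc : Type u} [AddCommGroup Lc] [Module ℚ Lc] (G : GLA Lc)
    (V0 V1 W0 W1 Sp : ℤ → Submodule ℚ Lc)
    (hV0 : ∀ i, V0 i ≤ G.grade i) (hV1 : ∀ i, V1 i ≤ G.grade i)
    (hW0 : ∀ i, W0 i ≤ G.grade i) (hW1 : ∀ i, W1 i ≤ G.grade i)
    -- the suspension `s(v ⊗ w)`, bilinear, of degree `|v|+|w|+1`
    (sus : Lc →ₗ[ℚ] Lc →ₗ[ℚ] Lc)
    (hsus : ∀ {i j : ℤ} {v w : Lc}, v ∈ V0 i ⊔ V1 i → w ∈ W0 j ⊔ W1 j →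
      sus v w ∈ Sp (i + j + 1))
    -- the derivations `σ_A` for homogeneous `A ∈ 𝕃(V ⊕ W)`
    (sg : ℤ → Lc → (Lc →ₗ[ℚ] Lc))
    (hsg_grade : ∀ {a : ℤ} {A : Lc}, A ∈ G.lieSub (fun i => V0 i ⊔ V1 i ⊔ W0 i ⊔ W1 i) →
      A ∈ G.grade a → ∀ {n : ℤ} {x : Lc}, x ∈ G.grade n → sg a A x ∈ G.grade (n + a + 1))
    (hsg_der : ∀ {a : ℤ} {A : Lc}, A ∈ G.lieSub (fun i => V0 i ⊔ V1 i ⊔ W0 i ⊔ W1 i) →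
      A ∈ G.grade a → ∀ {n : ℤ} (x y : Lc), x ∈ G.grade n →
      sg a A (G.br x y) = G.br (sg a A x) y + (-1 : ℚ) ^ ((a + 1) * n) • G.br x (sg a A y))
    (hsg_wv : ∀ {i j : ℤ} {v w : Lc}, v ∈ V0 i ⊔ V1 i → w ∈ W0 j ⊔ W1 j →
      sg j w v = (-1 : ℚ) ^ (i * j) • sus v w)
    (hsg_Aw : ∀ {a : ℤ} {A : Lc}, A ∈ G.lieSub (fun i => V0 i ⊔ V1 i ⊔ W0 i ⊔ W1 i) →
      A ∈ G.grade a → ∀ {j : ℤ} {w : Lc}, w ∈ W0 j ⊔ W1 j →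
      sg a A w = (-1 : ℚ) ^ (j * a) • sg j w A)
    -- the degree `-1` derivation `D` of `L`
    (D : Lc →ₗ[ℚ] Lc)
    (hD_der : ∀ {i : ℤ} (x y : Lc), x ∈ G.grade i →
      D (G.br x y) = G.br (D x) y + (-1 : ℚ) ^ ((-1 : ℤ) * i) • G.br x (D y))
    -- `D = ∂_V` on `V`, `D = ∂_W` on `W`: two-stage (2-cone) minimal models
    (hD_V0 : ∀ {i : ℤ} {v : Lc}, v ∈ V0 i → D v = 0)
    (hD_W0 : ∀ {j : ℤ} {w : Lc}, w ∈ W0 j → D w = 0)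
    (hD_V1 : ∀ {i : ℤ} {v : Lc}, v ∈ V1 i → D v ∈ G.lieSub V0)
    -- a chosen magma representative `(∂_V v)‾ ∈ 𝕄(V₀)` of `∂_V v` for `v ∈ V₁`
    (rep : ∀ (i : ℤ) (v : Lc), v ∈ V1 i → Mag V0)
    (hrep : ∀ (i : ℤ) (v : Lc) (h : v ∈ V1 i), Mag.real G (rep i v h) = D v)
    (hrepdeg : ∀ (i : ℤ) (v : Lc) (h : v ∈ V1 i), Mag.deg (rep i v h) = i - 1)
    -- the value of `D` on the suspension generators, formula (7) of the paper
    (hD_sus00 : ∀ {i j : ℤ} {v w : Lc}, v ∈ V0 i → w ∈ W0 j → D (sus v w) = G.br v w)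
    -- `W = V'` is a copy of `V`: the "prime" map, a dgl isomorphism onto the copy
    (pr : Lc →ₗ[ℚ] Lc)
    (hpr_V0 : ∀ {i : ℤ} {v : Lc}, v ∈ V0 i → pr v ∈ W0 i)
    (hpr_V1 : ∀ {i : ℤ} {v : Lc}, v ∈ V1 i → pr v ∈ W1 i)
    (hpr_br : ∀ {x y : Lc}, x ∈ G.lieSub (fun i => V0 i ⊔ V1 i) →
      y ∈ G.lieSub (fun i => V0 i ⊔ V1 i) → pr (G.br x y) = G.br (pr x) (pr y))
    (hpr_D : ∀ {x : Lc}, x ∈ G.lieSub (fun i => V0 i ⊔ V1 i) → pr (D x) = D (pr x))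
    -- the Lie morphism `Δ : 𝕃(V) → L` extending `v ↦ v + v'` by `Γ`-correction terms
    (Δf : Lc →ₗ[ℚ] Lc)
    (hΔf_br : ∀ {x y : Lc}, x ∈ G.lieSub (fun i => V0 i ⊔ V1 i) →
      y ∈ G.lieSub (fun i => V0 i ⊔ V1 i) → Δf (G.br x y) = G.br (Δf x) (Δf y))
    (hΔf_V0 : ∀ {i : ℤ} {v : Lc}, v ∈ V0 i → Δf v = v + pr v)
    (hΔf_V1 : ∀ (i : ℤ) (v : Lc) (h : v ∈ V1 i),
      Δf v = v + pr v + Mag.gam G sg pr Δf (rep i v h))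
    -- the two projections of `L` onto `𝕃(V)` and onto the copy `𝕃(V')`
    (p1 p2 : Lc →ₗ[ℚ] Lc)
    (hp1_br : ∀ x y : Lc, p1 (G.br x y) = G.br (p1 x) (p1 y))
    (hp2_br : ∀ x y : Lc, p2 (G.br x y) = G.br (p2 x) (p2 y))
    (hp1_V : ∀ {i : ℤ} {v : Lc}, v ∈ V0 i ⊔ V1 i → p1 v = v)
    (hp1_W : ∀ {j : ℤ} {w : Lc}, w ∈ W0 j ⊔ W1 j → p1 w = 0)
    (hp1_S : ∀ {k : ℤ} {x : Lc}, x ∈ Sp k → p1 x = 0)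
    (hp2_V : ∀ {i : ℤ} {v : Lc}, v ∈ V0 i ⊔ V1 i → p2 v = 0)
    (hp2_W : ∀ {j : ℤ} {w : Lc}, w ∈ W0 j ⊔ W1 j → p2 w = w)
    (hp2_S : ∀ {k : ℤ} {x : Lc}, x ∈ Sp k → p2 x = 0) :
    (∀ x : Lc, x ∈ G.lieSub (fun i => V0 i ⊔ V1 i) → D (Δf x) = Δf (D x)) ∧
    (∀ x : Lc, x ∈ G.lieSub (fun i => V0 i ⊔ V1 i) → p1 (Δf x) = x) ∧
    (∀ x : Lc, x ∈ G.lieSub (fun i => V0 i ⊔ V1 i) → p2 (Δf x) = pr x) := by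
  have hD : G.IsDerivation D (-1) := hD_der
  have hsub : G.lieSub (fun i => V0 i ⊔ W0 i) ≤
      G.lieSub (fun i => V0 i ⊔ V1 i ⊔ W0 i ⊔ W1 i) :=
    G.lieSub_mono fun i =>
      sup_le (le_sup_left.trans (le_sup_left.trans le_sup_left)) (le_sup_right.trans le_sup_left)
  have hσ : SigmaDerivations G V0 W0 sus sg :=
    ⟨hV0, hW0, fun hA => hsg_grade (hsub hA), fun hA ha => hsg_der (hsub hA) ha,
      fun hv hw => hsg_wv (Submodule.mem_sup_left hv) (Submodule.mem_sup_left hw),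
      fun hA ha _ _ hw => hsg_Aw (hsub hA) ha (Submodule.mem_sup_left hw)⟩
  have hV0_real : ∀ A : Mag V0, A.real G ∈ G.lieSub (fun i => V0 i ⊔ V1 i) :=
    Mag.real_mem_lieSub G fun _ => le_sup_left
  have hpr_br' := fun A B : Mag V0 => hpr_br (hV0_real A) (hV0_real B)
  have hΔf_br' := fun A B : Mag V0 => hΔf_br (hV0_real A) (hV0_real B)
  have hD_gen : ∀ i, V0 i ⊔ V1 i ≤ (G.lieSub (fun i => V0 i ⊔ V1 i)).comap D := fun i =>
    sup_le (fun v hv => by simp [hD_V0 hv])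
      (fun v hv => G.lieSub_mono (fun _ => le_sup_left) (hD_V1 hv))
  have hΔf_gen : ∀ i, V0 i ⊔ V1 i ≤ (G.grade i).comap Δf := fun i => by
    refine sup_le (fun v hv => ?_) (fun v hv => ?_) <;> rw [Submodule.mem_comap]
    · rw [hΔf_V0 hv]
      exact add_mem (hV0 i hv) (hW0 i (hpr_V0 hv))
    · have hΓ := hσ.gam_mem_grade (fun _ _ => hpr_V0) hpr_br' (fun _ _ => hΔf_V0) hΔf_br'
        (rep i v hv)
      rw [hrepdeg, sub_add_cancel] at hΓ
      rw [hΔf_V1 i v hv]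
      exact add_mem (add_mem (hV1 i hv) (hW1 i (hpr_V1 hv))) hΓ
  have hcomm_gen : ∀ i, Set.EqOn ⇑(D ∘ₗ Δf) ⇑(Δf ∘ₗ D) ↑(V0 i ⊔ V1 i) := fun i => by
    refine LinearMap.eqOn_sup (fun v hv => ?_) (fun v hv => ?_)
    · simp [hΔf_V0 hv, hD_V0 hv, hD_W0 (hpr_V0 hv)]
    · rw [LinearMap.comp_apply, LinearMap.comp_apply, hΔf_V1 i v hv, map_add, map_add,
        hσ.D_gam hD (fun _ _ => hD_V0) (fun _ _ => hD_W0) hD_sus00 (fun _ _ => hpr_V0) hpr_br'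
          (fun _ _ => hΔf_V0) hΔf_br',
        hrep, ← hpr_D (G.le_lieSub _ i (Submodule.mem_sup_right hv))]
      abel
  -- a projection `p` kills every term of `Γ`, so it sees `Δ v` as `v + v'`
  have hp_diag : ∀ {p : Lc →ₗ[ℚ] Lc}, (∀ x y, p (G.br x y) = G.br (p x) (p y)) →
      (∀ {k : ℤ} {x : Lc}, x ∈ Sp k → p x = 0) →
      ∀ i, Set.EqOn ⇑(p ∘ₗ Δf) ⇑(p + p ∘ₗ pr) ↑(V0 i ⊔ V1 i) := fun hp hp_S i =>
    LinearMap.eqOn_sup (fun v hv => by simp [hΔf_V0 hv])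
      (fun v hv => by
        simp [hΔf_V1 i v hv, hσ.apply_gam_eq_zero hp
          (fun hv hw => hp_S (hsus (Submodule.mem_sup_left hv) (Submodule.mem_sup_left hw)))
          (fun _ _ => hpr_V0) hpr_br'])
  have hpr_gen : ∀ i, V0 i ⊔ V1 i ≤ (W0 i ⊔ W1 i).comap pr := fun i =>
    sup_le (fun _ hv => Submodule.mem_sup_left (hpr_V0 hv))
      (fun _ hv => Submodule.mem_sup_right (hpr_V1 hv))
  refine ⟨fun x hx => hD.eqOn_comp_lieSub (fun i => sup_le (hV0 i) (hV1 i)) hΔf_br hD_gen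
      hΔf_gen hcomm_gen hx,
    fun x hx => G.eqOn_lieSub (f := p1 ∘ₗ Δf) (g := LinearMap.id)
      (fun hx hy => by rw [LinearMap.comp_apply, hΔf_br hx hy, hp1_br]; rfl) (fun _ _ => rfl)
      (fun i v hv => by simpa [hp1_V hv, hp1_W (hpr_gen i hv)] using hp_diag hp1_br hp1_S i hv)
      hx,
    fun x hx => G.eqOn_lieSub (f := p2 ∘ₗ Δf) (g := pr)
      (fun hx hy => by rw [LinearMap.comp_apply, hΔf_br hx hy, hp2_br]; rfl) hpr_br
      (fun i v hv => by simpa [hp2_V hv, hp2_W (hpr_gen i hv)] using hp_diag hp2_br hp2_S i hv)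
      hx⟩

/-- Theorem 4.4.  Let `(𝕃(V), ∂)` be the minimal Quillen model of a
2-cone `X` and `(L, D)` the model of `X × X`.  Any Lie algebra morphism `Δ : 𝕃(V) → L`
with `Δ(v) = v + v'` for `v ∈ V₀` and `Δ(v) = v + v' + Γ((∂v)‾)` for `v ∈ V₁` commutes
with the differentials, `D ∘ Δ = Δ ∘ ∂` on `𝕃(V)`, and its composition with the two
projections `(L, D) → (𝕃(V), ∂)` and `(L, D) → (𝕃(V'), ∂')` is the identity (under the
identification of the second copy); hence `Δ` is a Quillen model of the diagonal map
`X → X × X`. -/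
theorem statement18
    {Lc : Type u} [AddCommGroup Lc] [Module ℚ Lc] (G : GLA Lc)
    (V0 V1 W0 W1 Sp : ℤ → Submodule ℚ Lc)
    -- the ambient free Lie algebra is reduced
    (hred : G.Reduced)
    (hV0 : ∀ i, V0 i ≤ G.grade i) (hV1 : ∀ i, V1 i ≤ G.grade i)
    (hW0 : ∀ i, W0 i ≤ G.grade i) (hW1 : ∀ i, W1 i ≤ G.grade i)
    (hSp : ∀ i, Sp i ≤ G.grade i)
    -- the suspension `s(v ⊗ w)`, bilinear, of degree `|v|+|w|+1`
    (sus : Lc →ₗ[ℚ] Lc →ₗ[ℚ] Lc)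
    (hsus : ∀ {i j : ℤ} {v w : Lc}, v ∈ V0 i ⊔ V1 i → w ∈ W0 j ⊔ W1 j →
      sus v w ∈ Sp (i + j + 1))
    -- `L` is generated by `V ⊕ W ⊕ s(V ⊗ W)`
    (hgen : G.lieSub (fun i => V0 i ⊔ V1 i ⊔ W0 i ⊔ W1 i ⊔ Sp i) = ⊤)
    -- the derivations `σ_A` for homogeneous `A ∈ 𝕃(V ⊕ W)`
    (sg : ℤ → Lc → (Lc →ₗ[ℚ] Lc))
    (hsg_grade : ∀ {a : ℤ} {A : Lc}, A ∈ G.lieSub (fun i => V0 i ⊔ V1 i ⊔ W0 i ⊔ W1 i) →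
      A ∈ G.grade a → ∀ {n : ℤ} {x : Lc}, x ∈ G.grade n → sg a A x ∈ G.grade (n + a + 1))
    (hsg_der : ∀ {a : ℤ} {A : Lc}, A ∈ G.lieSub (fun i => V0 i ⊔ V1 i ⊔ W0 i ⊔ W1 i) →
      A ∈ G.grade a → ∀ {n : ℤ} (x y : Lc), x ∈ G.grade n →
      sg a A (G.br x y) = G.br (sg a A x) y + (-1 : ℚ) ^ ((a + 1) * n) • G.br x (sg a A y))
    (hsg_vw : ∀ {i j : ℤ} {v w : Lc}, v ∈ V0 i ⊔ V1 i → w ∈ W0 j ⊔ W1 j →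
      sg i v w = sus v w)
    (hsg_wv : ∀ {i j : ℤ} {v w : Lc}, v ∈ V0 i ⊔ V1 i → w ∈ W0 j ⊔ W1 j →
      sg j w v = (-1 : ℚ) ^ (i * j) • sus v w)
    (hsg_vv : ∀ {i i' : ℤ} {v v' : Lc}, v ∈ V0 i ⊔ V1 i → v' ∈ V0 i' ⊔ V1 i' →
      sg i v v' = 0)
    (hsg_ww : ∀ {j j' : ℤ} {w w' : Lc}, w ∈ W0 j ⊔ W1 j → w' ∈ W0 j' ⊔ W1 j' →
      sg j w w' = 0)
    (hsg_vS : ∀ {i k : ℤ} {v x : Lc}, v ∈ V0 i ⊔ V1 i → x ∈ Sp k → sg i v x = 0)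
    (hsg_wS : ∀ {j k : ℤ} {w x : Lc}, w ∈ W0 j ⊔ W1 j → x ∈ Sp k → sg j w x = 0)
    (hsg_Av : ∀ {a : ℤ} {A : Lc}, A ∈ G.lieSub (fun i => V0 i ⊔ V1 i ⊔ W0 i ⊔ W1 i) →
      A ∈ G.grade a → ∀ {i : ℤ} {v : Lc}, v ∈ V0 i ⊔ V1 i →
      sg a A v = (-1 : ℚ) ^ (i * a) • sg i v A)
    (hsg_Aw : ∀ {a : ℤ} {A : Lc}, A ∈ G.lieSub (fun i => V0 i ⊔ V1 i ⊔ W0 i ⊔ W1 i) →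
      A ∈ G.grade a → ∀ {j : ℤ} {w : Lc}, w ∈ W0 j ⊔ W1 j →
      sg a A w = (-1 : ℚ) ^ (j * a) • sg j w A)
    (hsg_AS : ∀ {a : ℤ} {A : Lc}, A ∈ G.lieSub (fun i => V0 i ⊔ V1 i ⊔ W0 i ⊔ W1 i) →
      A ∈ G.grade a → ∀ {k : ℤ} {x : Lc}, x ∈ Sp k → sg a A x = 0)
    -- the degree `-1` derivation `D` of `L`
    (D : Lc →ₗ[ℚ] Lc)
    (hD_grade : ∀ {i : ℤ} {x : Lc}, x ∈ G.grade i → D x ∈ G.grade (i - 1))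
    (hD_der : ∀ {i : ℤ} (x y : Lc), x ∈ G.grade i →
      D (G.br x y) = G.br (D x) y + (-1 : ℚ) ^ ((-1 : ℤ) * i) • G.br x (D y))
    -- `D = ∂_V` on `V`, `D = ∂_W` on `W`: two-stage (2-cone) minimal models
    (hD_V0 : ∀ {i : ℤ} {v : Lc}, v ∈ V0 i → D v = 0)
    (hD_W0 : ∀ {j : ℤ} {w : Lc}, w ∈ W0 j → D w = 0)
    (hD_V1 : ∀ {i : ℤ} {v : Lc}, v ∈ V1 i → D v ∈ G.lieSub V0)
    (hD_W1 : ∀ {j : ℤ} {w : Lc}, w ∈ W1 j → D w ∈ G.lieSub W0)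
    (hD_V1dec : ∀ {i : ℤ} {v : Lc}, v ∈ V1 i → D v ∈ G.dec)
    (hD_W1dec : ∀ {j : ℤ} {w : Lc}, w ∈ W1 j → D w ∈ G.dec)
    -- a chosen magma representative `(∂_V v)‾ ∈ 𝕄(V₀)` of `∂_V v` for `v ∈ V₁`
    (rep : ∀ (i : ℤ) (v : Lc), v ∈ V1 i → Mag V0)
    (hrep : ∀ (i : ℤ) (v : Lc) (h : v ∈ V1 i), Mag.real G (rep i v h) = D v)
    (hrepdeg : ∀ (i : ℤ) (v : Lc) (h : v ∈ V1 i), Mag.deg (rep i v h) = i - 1)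
    -- the value of `D` on the suspension generators, formula (7) of the paper
    (hD_sus00 : ∀ {i j : ℤ} {v w : Lc}, v ∈ V0 i → w ∈ W0 j → D (sus v w) = G.br v w)
    (hD_sus10 : ∀ {i j : ℤ} {v w : Lc}, v ∈ V1 i → w ∈ W0 j →
      D (sus v w) = G.br v w - (-1 : ℚ) ^ ((i + 1) * j) • sg j w (D v))
    (hD_sus01 : ∀ {i j : ℤ} {v w : Lc}, v ∈ V0 i → w ∈ W1 j →
      D (sus v w) = G.br v w - (-1 : ℚ) ^ i • sg i v (D w))
    (hD_sus11 : ∀ {i j : ℤ} {v w : Lc} (hv : v ∈ V1 i) (hw : w ∈ W1 j),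
      D (sus v w) = G.br v w - (-1 : ℚ) ^ ((i + 1) * j) • sg j w (D v)
        - (-1 : ℚ) ^ i • sg i v (D w)
        + (-1 : ℚ) ^ i • Mag.star G sg (j - 1) (rep i v hv) (D w))
    -- `(L, D)` is a dgl (Theorem 3.8 of the paper)
    (hDD : ∀ x : Lc, D (D x) = 0)
    -- `W = V'` is a copy of `V`: the "prime" map, a dgl isomorphism onto the copy
    (pr : Lc →ₗ[ℚ] Lc)
    (hpr_V0 : ∀ {i : ℤ} {v : Lc}, v ∈ V0 i → pr v ∈ W0 i)
    (hpr_V1 : ∀ {i : ℤ} {v : Lc}, v ∈ V1 i → pr v ∈ W1 i)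
    (hpr_br : ∀ {x y : Lc}, x ∈ G.lieSub (fun i => V0 i ⊔ V1 i) →
      y ∈ G.lieSub (fun i => V0 i ⊔ V1 i) → pr (G.br x y) = G.br (pr x) (pr y))
    (hpr_D : ∀ {x : Lc}, x ∈ G.lieSub (fun i => V0 i ⊔ V1 i) → pr (D x) = D (pr x))
    (hpr_onto0 : ∀ {j : ℤ} {w : Lc}, w ∈ W0 j → ∃ v ∈ V0 j, pr v = w)
    (hpr_onto1 : ∀ {j : ℤ} {w : Lc}, w ∈ W1 j → ∃ v ∈ V1 j, pr v = w)
    -- the Lie morphism `Δ : 𝕃(V) → L` extending `v ↦ v + v'` by `Γ`-correction terms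
    (Δf : Lc →ₗ[ℚ] Lc)
    (hΔf_br : ∀ {x y : Lc}, x ∈ G.lieSub (fun i => V0 i ⊔ V1 i) →
      y ∈ G.lieSub (fun i => V0 i ⊔ V1 i) → Δf (G.br x y) = G.br (Δf x) (Δf y))
    (hΔf_V0 : ∀ {i : ℤ} {v : Lc}, v ∈ V0 i → Δf v = v + pr v)
    (hΔf_V1 : ∀ (i : ℤ) (v : Lc) (h : v ∈ V1 i),
      Δf v = v + pr v + Mag.gam G sg pr Δf (rep i v h))
    -- the two projections of `L` onto `𝕃(V)` and onto the copy `𝕃(V')`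
    (p1 p2 : Lc →ₗ[ℚ] Lc)
    (hp1_br : ∀ x y : Lc, p1 (G.br x y) = G.br (p1 x) (p1 y))
    (hp2_br : ∀ x y : Lc, p2 (G.br x y) = G.br (p2 x) (p2 y))
    (hp1_V : ∀ {i : ℤ} {v : Lc}, v ∈ V0 i ⊔ V1 i → p1 v = v)
    (hp1_W : ∀ {j : ℤ} {w : Lc}, w ∈ W0 j ⊔ W1 j → p1 w = 0)
    (hp1_S : ∀ {k : ℤ} {x : Lc}, x ∈ Sp k → p1 x = 0)
    (hp2_V : ∀ {i : ℤ} {v : Lc}, v ∈ V0 i ⊔ V1 i → p2 v = 0)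
    (hp2_W : ∀ {j : ℤ} {w : Lc}, w ∈ W0 j ⊔ W1 j → p2 w = w)
    (hp2_S : ∀ {k : ℤ} {x : Lc}, x ∈ Sp k → p2 x = 0)
    (hp1_D : ∀ x : Lc, p1 (D x) = D (p1 x))
    (hp2_D : ∀ x : Lc, p2 (D x) = D (p2 x)) :
    (∀ x : Lc, x ∈ G.lieSub (fun i => V0 i ⊔ V1 i) → D (Δf x) = Δf (D x)) ∧
    (∀ x : Lc, x ∈ G.lieSub (fun i => V0 i ⊔ V1 i) → p1 (Δf x) = x) ∧
    (∀ x : Lc, x ∈ G.lieSub (fun i => V0 i ⊔ V1 i) → p2 (Δf x) = pr x) :=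
  statement18_general G V0 V1 W0 W1 Sp hV0 hV1 hW0 hW1 sus hsus sg hsg_grade hsg_der hsg_wv hsg_Aw D
    hD_der hD_V0 hD_W0 hD_V1 rep hrep hrepdeg hD_sus00 pr hpr_V0 hpr_V1 hpr_br hpr_D Δf hΔf_br
    hΔf_V0 hΔf_V1 p1 p2 hp1_br hp2_br hp1_V hp1_W hp1_S hp2_V hp2_W hp2_S
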